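/- arXiv:1801.02695 — 2 statements merged into one kernel-verified Lean document; each statement's English description precedes it below -/
import Mathlib

section
/- Let x_1,…,x_a (a ≥ 3) be points in an axis-parallel square R ⊂ ℝ² of side length b. Then for every 3 ≤ j ≤ a, TSP(x_1,…,x_j; R) ≤ TSP(x_1,…,x_a; R), and moreover TSP(x_1,…,x_a; R) ≤ 5b√a. -/
open MeasureTheory ProbabilityTheory Filter Finset
open scoped ENNReal Classical

noncomputable section

/-- Length of the closed tour visiting the points of `l` in cyclic order. -/
def tourLength (l : List (ℝ × ℝ)) : ℝ :=
  ((l.zip (l.rotate 1)).map fun p => dist p.1 p.2).sum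

/-- TSP length of a finite set of points in the plane: the minimum over spanning cycles
(cyclic orderings of the points) of the total edge length; `0` if there are at most
two points. -/
def tspLength (P : Finset (ℝ × ℝ)) : ℝ :=
  if P.card ≤ 2 then 0
  else sInf {L : ℝ | ∃ l : List (ℝ × ℝ), l.Nodup ∧ l.toFinset = P ∧ L = tourLength l}

/-- Axis-parallel square with lower-left corner `c` and side length `r`. -/
def square (c : ℝ × ℝ) (r : ℝ) : Set (ℝ × ℝ) := Set.Icc c (c.1 + r, c.2 + r)

def unitSquare : Set (ℝ × ℝ) := square (0, 0) 1

/-!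
Shortcutting: deleting vertices from a closed tour does not increase its length (triangle
inequality), so the TSP length is monotone in the point set.

Strips: cut the square into horizontal strips of height `h` and visit the points strip by strip,
each strip from left to right, i.e. in increasing order of `2 b ⌊y / h⌋ + x`. An edge inside a
strip costs at most its `x`-increment plus `h`; an edge climbing to a higher strip costs at most
`b`, which the jump of `2 b` in the key pays for. Summing, a tour of `n` points costs at most
`2 b (b / h) + 2 b + n h`, which is `3 b √n + 2 b ≤ 5 b √n` for `h = b / √n`.
-/

section PathLength

variable {α : Type*} [PseudoMetricSpace α]

def pathLength : List α → ℝ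
  | [] => 0
  | [_] => 0
  | p :: q :: t => dist p q + pathLength (q :: t)

@[simp]
lemma pathLength_singleton (p : α) : pathLength [p] = 0 := rfl

@[simp]
lemma pathLength_cons_cons (p q : α) (t : List α) :
    pathLength (p :: q :: t) = dist p q + pathLength (q :: t) := rfl

lemma pathLength_cons_le (p q : α) (t : List α) :
    pathLength (p :: t) ≤ dist p q + pathLength (q :: t) := by
  cases t with
  | nil => simp
  | cons r t =>
    simp only [pathLength_cons_cons]
    linarith [dist_triangle p q r]

lemma pathLength_cons_le_of_sublist {t' t : List α} (h : t'.Sublist t) (p : α) :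
    pathLength (p :: t') ≤ pathLength (p :: t) := by
  induction h generalizing p with
  | slnil => rfl
  | cons q _ ih => exact (ih p).trans (pathLength_cons_le p q _)
  | cons_cons q _ ih => simpa only [pathLength_cons_cons, add_le_add_iff_left] using ih q

lemma pathLength_cons_append_singleton (p q : α) (t : List α) :
    pathLength (p :: t ++ [q]) = pathLength (p :: t) + dist (t.getLastD p) q := by
  induction t generalizing p with
  | nil => simp
  | cons r t ih =>
    simp only [List.cons_append, pathLength_cons_cons, List.getLastD_cons] at ih ⊢
    rw [ih]
    ring

lemma pathLength_le_of_isChain (φ : α → ℝ) (C : ℝ) {p : α} {t : List α}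
    (h : (p :: t).IsChain fun u v => dist u v ≤ φ v - φ u + C) :
    pathLength (p :: t) ≤ φ (t.getLastD p) - φ p + t.length * C := by
  induction t generalizing p with
  | nil => simp
  | cons q t ih =>
    rw [List.isChain_cons_cons] at h
    have := ih h.2
    simp only [pathLength_cons_cons, List.getLastD_cons, List.length_cons, Nat.cast_add,
      Nat.cast_one]
    linarith [h.1]

end PathLength

lemma tourLength_nonneg (l : List (ℝ × ℝ)) : 0 ≤ tourLength l :=
  List.sum_nonneg fun _ hd => by
    obtain ⟨e, -, rfl⟩ := List.mem_map.mp hd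
    exact dist_nonneg

lemma tourLength_cons (p : ℝ × ℝ) (t : List (ℝ × ℝ)) :
    tourLength (p :: t) = pathLength (p :: t ++ [p]) := by
  suffices h : ∀ (q : ℝ × ℝ) (s : List (ℝ × ℝ)),
      (((q :: s).zip (s ++ [p])).map fun e => dist e.1 e.2).sum = pathLength (q :: s ++ [p]) by
    simpa [tourLength] using h p t
  intro q s
  induction s generalizing q with
  | nil => simp
  | cons r s ih => simp [ih]

lemma tourLength_cons_eq_pathLength_add_dist (p : ℝ × ℝ) (t : List (ℝ × ℝ)) :
    tourLength (p :: t) = pathLength (p :: t) + dist (t.getLastD p) p := by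
  rw [tourLength_cons, pathLength_cons_append_singleton]

lemma tourLength_cons_eq_append_singleton (p : ℝ × ℝ) (t : List (ℝ × ℝ)) :
    tourLength (p :: t) = tourLength (t ++ [p]) := by
  cases t with
  | nil => rfl
  | cons q t =>
    rw [tourLength_cons_eq_pathLength_add_dist, List.cons_append, tourLength_cons_eq_pathLength_add_dist,
      List.getLastD_concat, pathLength_cons_cons, ← List.cons_append,
      pathLength_cons_append_singleton, List.getLastD_cons, dist_comm]
    ring

lemma tourLength_append_comm (s t : List (ℝ × ℝ)) :
    tourLength (s ++ t) = tourLength (t ++ s) := by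
  induction s generalizing t with
  | nil => simp
  | cons p s ih =>
    rw [List.cons_append, tourLength_cons_eq_append_singleton, List.append_assoc, ih,
      List.append_assoc, List.singleton_append]

lemma tourLength_cons_le_of_sublist {t' t : List (ℝ × ℝ)} (h : t'.Sublist t) (p : ℝ × ℝ) :
    tourLength (p :: t') ≤ tourLength (p :: t) := by
  rw [tourLength_cons, tourLength_cons]
  exact pathLength_cons_le_of_sublist (h.append_right [p]) p

lemma tourLength_filter_le (l : List (ℝ × ℝ)) (f : ℝ × ℝ → Bool) :
    tourLength (l.filter f) ≤ tourLength l := by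
  by_cases hl : ∃ q ∈ l, f q
  · obtain ⟨q, hq, hfq⟩ := hl
    obtain ⟨s, t, rfl⟩ := List.append_of_mem hq
    calc tourLength ((s ++ q :: t).filter f)
        = tourLength (q :: (t ++ s).filter f) := by
          rw [List.filter_append, List.filter_cons_of_pos hfq, tourLength_append_comm,
            List.cons_append, List.filter_append]
      _ ≤ tourLength (q :: (t ++ s)) := tourLength_cons_le_of_sublist List.filter_sublist q
      _ = tourLength (s ++ q :: t) := by rw [← List.cons_append, tourLength_append_comm]
  · push Not at hl
    rw [List.filter_eq_nil_iff.mpr fun q hq => by simpa using hl q hq]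
    exact tourLength_nonneg l

lemma tspLength_nonneg (P : Finset (ℝ × ℝ)) : 0 ≤ tspLength P := by
  unfold tspLength
  split_ifs
  · rfl
  · exact Real.sInf_nonneg (by rintro L ⟨l, -, -, rfl⟩; exact tourLength_nonneg l)

lemma tspLength_of_two_lt_card {P : Finset (ℝ × ℝ)} (hP : 2 < P.card) :
    tspLength P = sInf {L : ℝ | ∃ l : List (ℝ × ℝ), l.Nodup ∧ l.toFinset = P ∧ L = tourLength l} :=
  if_neg (by omega)

lemma tspLength_le_tourLength {P : Finset (ℝ × ℝ)} (hP : 2 < P.card) {l : List (ℝ × ℝ)}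
    (hl : l.Nodup) (hlP : l.toFinset = P) : tspLength P ≤ tourLength l := by
  rw [tspLength_of_two_lt_card hP]
  exact csInf_le ⟨0, by rintro L ⟨l', -, -, rfl⟩; exact tourLength_nonneg l'⟩ ⟨l, hl, hlP, rfl⟩

lemma tspLength_mono {P Q : Finset (ℝ × ℝ)} (hQP : Q ⊆ P) : tspLength Q ≤ tspLength P := by
  by_cases hQ : Q.card ≤ 2
  · rw [tspLength, if_pos hQ]
    exact tspLength_nonneg P
  push Not at hQ
  rw [tspLength_of_two_lt_card (hQ.trans_le (Finset.card_le_card hQP))]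
  refine le_csInf ⟨tourLength P.toList, P.toList, P.nodup_toList, P.toList_toFinset, rfl⟩ ?_
  rintro _ ⟨l, hl, hlP, rfl⟩
  refine (tspLength_le_tourLength hQ (hl.filter (· ∈ Q)) ?_).trans (tourLength_filter_le l _)
  rw [List.toFinset_filter, hlP]
  ext z
  simpa using fun hz => hQP hz

section Strips

variable {c p q : ℝ × ℝ} {b h : ℝ}

lemma dist_le_of_mem_square (hp : p ∈ square c b) (hq : q ∈ square c b) : dist p q ≤ b := by
  obtain ⟨⟨hp1, hp2⟩, hp3, hp4⟩ := hp
  obtain ⟨⟨hq1, hq2⟩, hq3, hq4⟩ := hq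
  rw [Prod.dist_eq, Real.dist_eq, Real.dist_eq]
  exact max_le (abs_sub_le_iff.mpr ⟨by linarith, by linarith⟩)
    (abs_sub_le_iff.mpr ⟨by linarith, by linarith⟩)

def stripIndex (c : ℝ × ℝ) (h : ℝ) (p : ℝ × ℝ) : ℤ := ⌊(p.2 - c.2) / h⌋

def stripKey (c : ℝ × ℝ) (b h : ℝ) (p : ℝ × ℝ) : ℝ := 2 * b * stripIndex c h p + p.1

lemma abs_sub_snd_lt_of_stripIndex_eq (hh : 0 < h) (hpq : stripIndex c h p = stripIndex c h q) :
    |p.2 - q.2| < h := by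
  have := Int.abs_sub_lt_one_of_floor_eq_floor hpq
  rwa [← sub_div, abs_div, abs_of_pos hh, div_lt_one hh, sub_sub_sub_cancel_right] at this

lemma dist_le_stripKey_sub (hb : 0 < b) (hh : 0 < h) (hp : p ∈ square c b) (hq : q ∈ square c b)
    (hpq : stripKey c b h p ≤ stripKey c b h q) :
    dist p q ≤ stripKey c b h q - stripKey c b h p + h := by
  have hdist := dist_le_of_mem_square hp hq
  obtain ⟨⟨hp1, -⟩, hp2, -⟩ := hp
  obtain ⟨⟨hq1, -⟩, hq2, -⟩ := hq
  unfold stripKey at hpq ⊢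
  rcases lt_trichotomy (stripIndex c h p) (stripIndex c h q) with hlt | heq | hgt
  · have : 2 * b * (stripIndex c h p + 1 : ℝ) ≤ 2 * b * stripIndex c h q := by
      gcongr
      exact_mod_cast hlt
    linarith
  · have hy := abs_sub_snd_lt_of_stripIndex_eq hh heq
    rw [heq] at hpq ⊢
    rw [Prod.dist_eq, Real.dist_eq, Real.dist_eq, abs_sub_comm, abs_of_nonneg (by linarith)]
    exact max_le (by linarith) (by linarith)
  · have : 2 * b * (stripIndex c h q + 1 : ℝ) ≤ 2 * b * stripIndex c h p := by
      gcongr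
      exact_mod_cast hgt
    linarith

lemma le_stripKey (hb : 0 ≤ b) (hh : 0 < h) (hp : p ∈ square c b) : c.1 ≤ stripKey c b h p := by
  obtain ⟨⟨hp1, hp2⟩, -⟩ := hp
  have : (0 : ℝ) ≤ stripIndex c h p := by
    exact_mod_cast Int.floor_nonneg.mpr (div_nonneg (by linarith) hh.le)
  unfold stripKey
  nlinarith

lemma stripKey_le (hb : 0 ≤ b) (hh : 0 < h) (hp : p ∈ square c b) :
    stripKey c b h p ≤ 2 * b * (b / h) + c.1 + b := by
  obtain ⟨-, hp1, hp2⟩ := hp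
  have : (stripIndex c h p : ℝ) ≤ b / h :=
    (Int.floor_le _).trans (div_le_div_of_nonneg_right (by linarith) hh.le)
  unfold stripKey
  nlinarith

lemma tourLength_le_of_pairwise_stripKey (hb : 0 < b) (hh : 0 < h) {l : List (ℝ × ℝ)}
    (hl : ∀ z ∈ l, z ∈ square c b)
    (hsort : l.Pairwise fun p q => stripKey c b h p ≤ stripKey c b h q) :
    tourLength l ≤ 2 * b * (b / h) + 2 * b + l.length * h := by
  cases l with
  | nil =>
    show (0 : ℝ) ≤ _
    positivity
  | cons p t =>
    have hchain : (p :: t).IsChain fun u v => dist u v ≤ stripKey c b h v - stripKey c b h u + h :=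
      (hsort.imp_of_mem fun hu hv => dist_le_stripKey_sub hb hh (hl _ hu) (hl _ hv)).isChain
    have hlast := hl _ List.getLastD_mem_cons
    have hfirst := hl p List.mem_cons_self
    have hpath := pathLength_le_of_isChain _ _ hchain
    have := stripKey_le hb.le hh hlast
    have := le_stripKey hb.le hh hfirst
    have := dist_le_of_mem_square hlast hfirst
    rw [tourLength_cons_eq_pathLength_add_dist, List.length_cons, Nat.cast_succ]
    linarith

lemma tspLength_le_of_subset_square (hb : 0 < b) (hh : 0 < h) {P : Finset (ℝ × ℝ)}
    (hP : ∀ z ∈ P, z ∈ square c b) :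
    tspLength P ≤ 2 * b * (b / h) + 2 * b + P.card * h := by
  by_cases hP2 : P.card ≤ 2
  · rw [tspLength, if_pos hP2]
    positivity
  push Not at hP2
  set l := P.toList.mergeSort fun p q => decide (stripKey c b h p ≤ stripKey c b h q)
  have hperm : l.Perm P.toList := List.mergeSort_perm _ _
  have hsort : l.Pairwise fun p q => stripKey c b h p ≤ stripKey c b h q := by
    simpa using List.pairwise_mergeSort
      (le := fun p q => decide (stripKey c b h p ≤ stripKey c b h q))
      (fun _ _ _ => by simpa using le_trans) (fun _ _ => by simpa using le_total _ _) P.toList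
  calc tspLength P ≤ tourLength l := tspLength_le_tourLength hP2
        (hperm.nodup_iff.mpr P.nodup_toList)
        (by rw [List.toFinset_eq_of_perm _ _ hperm, P.toList_toFinset])
    _ ≤ 2 * b * (b / h) + 2 * b + l.length * h := tourLength_le_of_pairwise_stripKey hb hh
        (fun z hz => hP z (by simpa using hperm.mem_iff.mp hz)) hsort
    _ = 2 * b * (b / h) + 2 * b + P.card * h := by rw [hperm.length_eq, P.length_toList]

lemma tspLength_le_five_mul_sqrt_card (hb : 0 < b) {P : Finset (ℝ × ℝ)}
    (hP : ∀ z ∈ P, z ∈ square c b) : tspLength P ≤ 5 * b * √P.card := by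
  rcases Nat.eq_zero_or_pos P.card with h0 | hpos
  · rw [tspLength, if_pos (by omega), h0, Nat.cast_zero, Real.sqrt_zero, mul_zero]
  have hs : 1 ≤ √P.card := Real.one_le_sqrt.mpr (by exact_mod_cast hpos)
  have hcard : (P.card : ℝ) * (b / √P.card) = b * √P.card := by
    field_simp
    exact (Real.sq_sqrt (Nat.cast_nonneg _)).symm
  have := tspLength_le_of_subset_square hb (div_pos hb (by positivity : 0 < √P.card)) hP
  rw [div_div_cancel₀ hb.ne', hcard] at this
  nlinarith

end Strips

theorem tsp_monotone_and_strips_bound_general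
    (a : ℕ) (c : ℝ × ℝ) (b : ℝ) (hb : 0 < b)
    (x : Fin a → ℝ × ℝ) (hx : ∀ i, x i ∈ square c b) :
    (∀ (j : ℕ), 3 ≤ j → ∀ hj : j ≤ a,
      tspLength (Finset.univ.image fun i : Fin j => x (Fin.castLE hj i)) ≤
        tspLength (Finset.univ.image x)) ∧
    tspLength (Finset.univ.image x) ≤ 5 * b * Real.sqrt a := by
  refine ⟨fun j _ hj => tspLength_mono ?_, ?_⟩
  · exact Finset.image_subset_iff.mpr fun i _ => Finset.mem_image_of_mem x (Finset.mem_univ _)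
  calc tspLength (Finset.univ.image x) ≤ 5 * b * √(Finset.univ.image x).card :=
        tspLength_le_five_mul_sqrt_card hb (by simpa using hx)
    _ ≤ 5 * b * √a := by
        gcongr
        exact Finset.card_image_le.trans (by simp)

/-- strips method, (2.2): monotonicity of the TSP length and the
upper bound `5 b sqrt a` for `a` points in a square of side `b`. -/
theorem tsp_monotone_and_strips_bound
    (a : ℕ) (ha : 3 ≤ a) (c : ℝ × ℝ) (b : ℝ) (hb : 0 < b)
    (x : Fin a → ℝ × ℝ) (hx : ∀ i, x i ∈ square c b) :
    (∀ (j : ℕ), 3 ≤ j → ∀ hj : j ≤ a,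
      tspLength (Finset.univ.image fun i : Fin j => x (Fin.castLE hj i)) ≤
        tspLength (Finset.univ.image x)) ∧
    tspLength (Finset.univ.image x) ≤ 5 * b * Real.sqrt a :=
  tsp_monotone_and_strips_bound_general a c b hb x hx
end
end

section
/- Let Q ⊂ ℝ² be an axis-parallel square of side length r and let f be a measurable function on Q with ε₁ ≤ f ≤ ε₂ for constants 0 < ε₁ ≤ ε₂ < ∞. Let Z_1,…,Z_k (k ≥ 2) be i.i.d. random points in Q with law P(Z ∈ A) = (∫_{A∩Q} f)/(∫_Q f). Then there exist positive constants γ₁, γ₂, γ₃ depending only on ε₁ and ε₂ such that γ₁ r/√k ≤ E[d(Z_k, {Z_1,…,Z_{k−1}})] ≤ γ₂ r/√k and E[d²(Z_k, {Z_1,…,Z_{k−1}})] ≤ γ₃ r²/k, where d(x, B) = min_{y∈B} |x − y| denotes the Euclidean distance from the point x to the finite set B. -/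
open MeasureTheory ProbabilityTheory Filter Finset
open scoped ENNReal Classical

noncomputable section

/-!
Write `D` for the distance from the last point to the others and `ν` for their common law.
Given that the last point is `x`, `D ≥ t` exactly when the other `k - 1` points avoid the ball
`B(x, t)`, so by independence `P(D ≥ t) = ∫ (1 - ν(B(x, t)))^(k-1) dν(x)`. The density of `ν`
is within the factors `ε₁ / ε₂` and `ε₂ / ε₁` of the uniform density `1 / r²`, and `B(x, t)`
meets the square in area at least `t²` (for `t ≤ r`) and at most `4 t²`. Hence
`P(D ≥ t) ≤ exp (-(k - 1) ε₁ t² / (ε₂ r²))`, which gives `E D² ≲ r² / k` by the layer-cake formula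
and then `E D ≤ √(E D²)`; and for `t ≍ r / √k` Bernoulli's inequality gives `P(D ≥ t) ≥ 1 / 2`,
so `E D ≳ r / √k` by Markov's inequality.
-/

open Metric Real

section Independence

variable {ι Ω E : Type*} [Fintype ι] [MeasurableSpace Ω] [MeasurableSpace E] {P : Measure Ω}
  [IsProbabilityMeasure P] {ν : Measure E} {Z : ι → Ω → E} {j : ι}

/-- Conditioning on `Z j = x`, the other points fall independently in the slice of `R` over `x`. -/
theorem measure_forall_ne_mem_eq_lintegral_pow (hZ : ∀ i, Measurable (Z i))
    (hind : iIndepFun Z P) (hlaw : ∀ i, P.map (Z i) = ν) {R : Set (E × E)}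
    (hR : MeasurableSet R) :
    P {ω | ∀ i ≠ j, (Z j ω, Z i ω) ∈ R} =
      ∫⁻ x, ν (Prod.mk x ⁻¹' R) ^ (Fintype.card ι - 1) ∂ν := by
  set S : Finset ι := {j}ᶜ
  let Y : Ω → S → E := fun ω i => Z i ω
  have hY : Measurable Y := measurable_pi_lambda _ fun i => hZ i
  have hindY : IndepFun (Z j) Y P :=
    (hind.indepFun_finset {j} S (Finset.disjoint_singleton_left.2 (by simp [S])) hZ).comp
      (measurable_pi_apply (⟨j, Finset.mem_singleton_self j⟩ : ({j} : Finset ι))) measurable_id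
  let R' : Set (E × (S → E)) := {p | ∀ i, (p.1, p.2 i) ∈ R}
  have hR' : MeasurableSet R' := by
    simp only [R', Set.ofPred_forall]
    exact .iInter fun i =>
      hR.preimage (measurable_fst.prodMk ((measurable_pi_apply i).comp measurable_snd))
  have hslice : ∀ x, P.map Y (Prod.mk x ⁻¹' R') = ν (Prod.mk x ⁻¹' R) ^ (Fintype.card ι - 1) := by
    intro x
    have hRx : MeasurableSet (Prod.mk x ⁻¹' R) := measurable_prodMk_left hR
    rw [Measure.map_apply hY (measurable_prodMk_left hR')]
    have hpre : Y ⁻¹' (Prod.mk x ⁻¹' R') = ⋂ i ∈ S, Z i ⁻¹' (Prod.mk x ⁻¹' R) := by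
      ext ω; simp [Y, R', S]
    rw [hpre, hind.measure_inter_preimage_eq_mul S fun _ _ => hRx]
    simp_rw [← Measure.map_apply (hZ _) hRx, hlaw]
    rw [Finset.prod_const, Finset.card_compl, Finset.card_singleton]
  have hprod : P.map (fun ω => (Z j ω, Y ω)) = ν.prod (P.map Y) := by
    rw [(indepFun_iff_map_prod_eq_prod_map_map (hZ j).aemeasurable hY.aemeasurable).1 hindY, hlaw]
  have : IsProbabilityMeasure (P.map Y) := Measure.isProbabilityMeasure_map hY.aemeasurable
  have hset : {ω | ∀ i ≠ j, (Z j ω, Z i ω) ∈ R} = (fun ω => (Z j ω, Y ω)) ⁻¹' R' := by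
    ext ω; simp [Y, R', S]
  rw [hset, ← Measure.map_apply ((hZ j).prodMk hY) hR', hprod, Measure.prod_apply hR']
  simp_rw [hslice]

end Independence

section NearestNeighbour

variable {ι Ω E : Type*} [PseudoMetricSpace E]

def nearestDist (Z : ι → Ω → E) (j : ι) (ω : Ω) : ℝ :=
  infDist (Z j ω) {p | ∃ i, i ≠ j ∧ p = Z i ω}

variable {Z : ι → Ω → E} {j : ι}

theorem nearestDist_nonneg (ω : Ω) : 0 ≤ nearestDist Z j ω := infDist_nonneg

theorem nearestDist_le_dist {i : ι} (hi : i ≠ j) (ω : Ω) :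
    nearestDist Z j ω ≤ dist (Z j ω) (Z i ω) :=
  infDist_le_dist_of_mem ⟨i, hi, rfl⟩

theorem le_nearestDist_iff [Nontrivial ι] {t : ℝ} {ω : Ω} :
    t ≤ nearestDist Z j ω ↔ ∀ i ≠ j, t ≤ dist (Z j ω) (Z i ω) := by
  obtain ⟨i, hi⟩ := exists_ne j
  have hne : {p | ∃ i, i ≠ j ∧ p = Z i ω}.Nonempty := ⟨Z i ω, i, hi, rfl⟩
  rw [nearestDist, ← not_lt, infDist_lt_iff hne]
  simp

theorem infDist_setOf_lt_eq_nearestDist {k : ℕ} (hk : 0 < k) (Z : Fin k → Ω → E) (ω : Ω) :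
    infDist (Z ⟨k - 1, by omega⟩ ω) {p | ∃ i : Fin k, (i : ℕ) < k - 1 ∧ p = Z i ω} =
      nearestDist Z ⟨k - 1, by omega⟩ ω := by
  rw [nearestDist]
  congr 2 with p
  refine exists_congr fun i => and_congr_left' ?_
  simp only [ne_eq, Fin.ext_iff]
  have := i.isLt
  omega

variable [MeasurableSpace Ω] [MeasurableSpace E]

theorem measurable_nearestDist [OpensMeasurableSpace E] [SecondCountableTopology E]
    [Countable ι] [Nontrivial ι] (hZ : ∀ i, Measurable (Z i)) : Measurable (nearestDist Z j) := by
  refine measurable_of_Ici fun t => ?_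
  simp only [Set.preimage, Set.mem_Ici, le_nearestDist_iff, Set.ofPred_forall]
  exact .iInter fun i => .iInter fun _ =>
    measurableSet_le measurable_const ((hZ j).dist (hZ i))

variable [Fintype ι] {P : Measure Ω} [IsProbabilityMeasure P] {ν : Measure E}

theorem measure_le_nearestDist_eq_lintegral [OpensMeasurableSpace E] [SecondCountableTopology E]
    [Nontrivial ι] [IsProbabilityMeasure ν] (hZ : ∀ i, Measurable (Z i))
    (hind : iIndepFun Z P) (hlaw : ∀ i, P.map (Z i) = ν) (t : ℝ) :
    P {ω | t ≤ nearestDist Z j ω} = ∫⁻ x, (1 - ν (ball x t)) ^ (Fintype.card ι - 1) ∂ν := by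
  have hR : MeasurableSet {p : E × E | t ≤ dist p.1 p.2} :=
    measurableSet_le measurable_const (measurable_fst.dist measurable_snd)
  have hset : {ω | t ≤ nearestDist Z j ω} =
      {ω | ∀ i ≠ j, (Z j ω, Z i ω) ∈ {p : E × E | t ≤ dist p.1 p.2}} := by
    ext ω; simp [le_nearestDist_iff]
  rw [hset, measure_forall_ne_mem_eq_lintegral_pow hZ hind hlaw hR]
  refine lintegral_congr fun x => ?_
  have hslice : Prod.mk x ⁻¹' {p : E × E | t ≤ dist p.1 p.2} = (ball x t)ᶜ := by
    ext y; simp [dist_comm]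
  rw [hslice, prob_compl_eq_one_sub measurableSet_ball]

end NearestNeighbour

section Square

theorem square_eq_prod (c : ℝ × ℝ) (r : ℝ) :
    square c r = Set.Icc c.1 (c.1 + r) ×ˢ Set.Icc c.2 (c.2 + r) :=
  Set.Icc_prod_eq _ _

theorem measurableSet_square (c : ℝ × ℝ) (r : ℝ) : MeasurableSet (square c r) :=
  measurableSet_Icc

theorem volume_square (c : ℝ × ℝ) {r : ℝ} (hr : 0 ≤ r) :
    volume (square c r) = ENNReal.ofReal (r ^ 2) := by
  rw [square_eq_prod, Measure.volume_eq_prod, Measure.prod_prod, Real.volume_Icc,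
    Real.volume_Icc, ← ENNReal.ofReal_mul (by simpa using hr)]
  ring_nf

theorem dist_le_of_mem_square_s17 {c x y : ℝ × ℝ} {r : ℝ} (hx : x ∈ square c r)
    (hy : y ∈ square c r) : dist x y ≤ r := by
  rw [square_eq_prod] at hx hy
  rw [Prod.dist_eq, max_le_iff]
  constructor
  · simpa using Real.dist_le_of_mem_Icc hx.1 hy.1
  · simpa using Real.dist_le_of_mem_Icc hx.2 hy.2

theorem square_subset_ball {c x : ℝ × ℝ} {r t : ℝ} (hx : x ∈ square c r) (hrt : r < t) :
    square c r ⊆ ball x t := fun _ hy =>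
  mem_ball'.2 ((dist_le_of_mem_square_s17 hx hy).trans_lt hrt)

/-- Balls in `ℝ × ℝ` are for the sup distance, i.e. squares of side `2 t`. -/
theorem volume_ball_prod (x : ℝ × ℝ) {t : ℝ} (ht : 0 ≤ t) :
    volume (ball x t) = ENNReal.ofReal ((2 * t) ^ 2) := by
  rw [← ball_prod_same, Measure.volume_eq_prod, Measure.prod_prod, Real.volume_ball,
    Real.volume_ball, ← ENNReal.ofReal_mul (by linarith), sq]

theorem Real.exists_Ioo_subset_ball_inter_Icc {u r x t : ℝ} (hx : x ∈ Set.Icc u (u + r))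
    (ht : 0 ≤ t) (htr : t ≤ r) : ∃ a, Set.Ioo a (a + t) ⊆ ball x t ∩ Set.Icc u (u + r) := by
  refine ⟨min x (u + r - t), fun _ hy => ⟨?_, ?_⟩⟩
  · rw [Real.ball_eq_Ioo]
    constructor <;> cases min_cases x (u + r - t) <;> linarith [hx.1, hx.2, hy.1, hy.2]
  · constructor <;> cases min_cases x (u + r - t) <;> linarith [hx.1, hx.2, hy.1, hy.2]

theorem volume_ball_inter_square_ge {c x : ℝ × ℝ} {r t : ℝ} (hx : x ∈ square c r)
    (ht : 0 ≤ t) (htr : t ≤ r) : ENNReal.ofReal (t ^ 2) ≤ volume (ball x t ∩ square c r) := by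
  rw [square_eq_prod] at hx ⊢
  obtain ⟨a, ha⟩ := Real.exists_Ioo_subset_ball_inter_Icc hx.1 ht htr
  obtain ⟨b, hb⟩ := Real.exists_Ioo_subset_ball_inter_Icc hx.2 ht htr
  calc ENNReal.ofReal (t ^ 2) = volume (Set.Ioo a (a + t) ×ˢ Set.Ioo b (b + t)) := by
        rw [Measure.volume_eq_prod, Measure.prod_prod, Real.volume_Ioo, Real.volume_Ioo,
          ← ENNReal.ofReal_mul (by simpa using ht)]
        ring_nf
    _ ≤ volume (ball x t ∩ Set.Icc c.1 (c.1 + r) ×ˢ Set.Icc c.2 (c.2 + r)) := by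
        refine measure_mono fun p hp => ?_
        obtain ⟨hpa, hpa'⟩ := ha hp.1
        obtain ⟨hpb, hpb'⟩ := hb hp.2
        rw [← ball_prod_same]
        exact ⟨⟨hpa, hpb⟩, hpa', hpb'⟩

end Square

section Density

variable {α : Type*} [MeasurableSpace α] {μ : Measure α} {Q : Set α}

theorem restrict_withDensity_apply_le [SFinite μ] (hQ : MeasurableSet Q) {g : α → ℝ≥0∞}
    {b : ℝ≥0∞} (hg : ∀ x ∈ Q, g x ≤ b) (A : Set α) :
    (μ.restrict Q).withDensity g A ≤ b * μ (A ∩ Q) := by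
  rw [withDensity_apply', ← Measure.restrict_apply' hQ, ← setLIntegral_const]
  exact lintegral_mono_ae (ae_restrict_of_ae ((ae_restrict_mem hQ).mono hg))

theorem le_restrict_withDensity_apply [SFinite μ] (hQ : MeasurableSet Q) {g : α → ℝ≥0∞}
    {a : ℝ≥0∞} (hg : ∀ x ∈ Q, a ≤ g x) (A : Set α) :
    a * μ (A ∩ Q) ≤ (μ.restrict Q).withDensity g A := by
  rw [withDensity_apply', ← Measure.restrict_apply' hQ, ← setLIntegral_const]
  exact lintegral_mono_ae (ae_restrict_of_ae ((ae_restrict_mem hQ).mono hg))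

variable {f : α → ℝ} {ε₁ ε₂ : ℝ}

theorem mul_measureReal_le_setIntegral_le (hQ : MeasurableSet Q) (hμQ : μ Q ≠ ∞)
    (hf : Measurable f) (hfQ : ∀ x ∈ Q, ε₁ ≤ f x ∧ f x ≤ ε₂) :
    ε₁ * μ.real Q ≤ ∫ x in Q, f x ∂μ ∧ ∫ x in Q, f x ∂μ ≤ ε₂ * μ.real Q := by
  have hint : IntegrableOn f Q μ := by
    refine .of_bound hμQ.lt_top hf.aestronglyMeasurable (max |ε₁| |ε₂|) ?_
    filter_upwards [ae_restrict_mem hQ] with x hx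
    exact abs_le_max_abs_abs (hfQ x hx).1 (hfQ x hx).2
  refine ⟨setIntegral_ge_of_const_le_real hQ hμQ (fun x hx => (hfQ x hx).1) hint, ?_⟩
  calc ∫ x in Q, f x ∂μ ≤ ∫ _ in Q, ε₂ ∂μ :=
        setIntegral_mono_on hint (integrableOn_const hμQ) hQ fun x hx => (hfQ x hx).2
    _ = ε₂ * μ.real Q := by rw [setIntegral_const, smul_eq_mul, mul_comm]

theorem div_setIntegral_mem_Icc (hε₁ : 0 < ε₁) (hQ : MeasurableSet Q) (hμQ : μ Q ≠ ∞)
    (hμQ₀ : μ Q ≠ 0) (hf : Measurable f) (hfQ : ∀ x ∈ Q, ε₁ ≤ f x ∧ f x ≤ ε₂) {x : α}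
    (hx : x ∈ Q) :
    f x / ∫ y in Q, f y ∂μ ∈ Set.Icc (ε₁ / ε₂ / μ.real Q) (ε₂ / ε₁ / μ.real Q) := by
  obtain ⟨hI₁, hI₂⟩ := mul_measureReal_le_setIntegral_le hQ hμQ hf hfQ
  obtain ⟨hfx₁, hfx₂⟩ := hfQ x hx
  have hV : 0 < μ.real Q := ENNReal.toReal_pos hμQ₀ hμQ
  have hε₂ : 0 < ε₂ := hε₁.trans_le (hfx₁.trans hfx₂)
  have hI : 0 < ∫ y in Q, f y ∂μ := (mul_pos hε₁ hV).trans_le hI₁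
  constructor
  · rw [div_div, div_le_div_iff₀ (by positivity) hI]
    nlinarith
  · rw [div_div, div_le_div_iff₀ hI (by positivity)]
    nlinarith

end Density

section Moments

variable {Ω : Type*} [MeasurableSpace Ω] {μ : Measure Ω} {X : Ω → ℝ}

/-- Layer-cake formula for `X ^ 2`: its tail at `s` is the tail of `X` at `√s`. -/
theorem integral_sq_le_of_measure_le_exp (hX₀ : ∀ ω, 0 ≤ X ω) (hX : Measurable X) {b : ℝ}
    (hb : 0 < b) (htail : ∀ t, 0 ≤ t → μ {ω | t ≤ X ω} ≤ ENNReal.ofReal (exp (-b * t ^ 2))) :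
    ∫ ω, X ω ^ 2 ∂μ ≤ 1 / b := by
  have hexp : ∫⁻ s in Set.Ioi 0, ENNReal.ofReal (exp (-b * s)) = ENNReal.ofReal (1 / b) := by
    rw [← ofReal_integral_eq_lintegral_ofReal (exp_neg_integrableOn_Ioi 0 hb)
      (ae_of_all _ fun _ => (exp_pos _).le), integral_exp_mul_Ioi (neg_neg_of_pos hb)]
    simp
  rw [integral_eq_lintegral_of_nonneg_ae (ae_of_all _ fun ω => sq_nonneg (X ω))
    (hX.pow_const 2).aestronglyMeasurable]
  refine ENNReal.toReal_le_of_le_ofReal (by positivity) ?_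
  rw [lintegral_eq_lintegral_meas_le μ (ae_of_all _ fun ω => sq_nonneg (X ω))
    (hX.pow_const 2).aemeasurable, ← hexp]
  refine setLIntegral_mono (by fun_prop) fun s (hs : 0 < s) => ?_
  have hsqrt : {ω | s ≤ X ω ^ 2} = {ω | √s ≤ X ω} := by
    ext ω; simp [Real.sqrt_le_iff, hX₀ ω]
  simpa [hsqrt, Real.sq_sqrt hs.le] using htail (√s) (Real.sqrt_nonneg s)

theorem integral_le_sqrt_integral_sq [IsProbabilityMeasure μ] (hX : MemLp X 2 μ) :
    ∫ ω, X ω ∂μ ≤ √(∫ ω, X ω ^ 2 ∂μ) := by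
  have hvar := variance_nonneg X μ
  rw [variance_eq_sub hX] at hvar
  exact (le_abs_self _).trans (Real.abs_le_sqrt (by simpa using hvar))

end Moments

section SquareSample

variable {ι Ω : Type*} [Nontrivial ι] [MeasurableSpace Ω] {P : Measure Ω}
  {Z : ι → Ω → ℝ × ℝ} {ν : Measure (ℝ × ℝ)} {j : ι} {c : ℝ × ℝ} {r κ K t : ℝ}

theorem ae_nearestDist_le (hZ : ∀ i, Measurable (Z i)) (hlaw : ∀ i, P.map (Z i) = ν)
    (hνQ : ν (square c r)ᶜ = 0) : ∀ᵐ ω ∂P, nearestDist Z j ω ≤ r := by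
  have hmem : ∀ i, ∀ᵐ ω ∂P, Z i ω ∈ square c r := fun i => by
    rw [ae_iff]
    change P (Z i ⁻¹' (square c r)ᶜ) = 0
    rw [← Measure.map_apply (hZ i) (measurableSet_square c r).compl, hlaw, hνQ]
  obtain ⟨i, hi⟩ := exists_ne j
  filter_upwards [hmem j, hmem i] with ω hj hi'
  exact (nearestDist_le_dist hi ω).trans (dist_le_of_mem_square_s17 hj hi')

variable [Fintype ι] [IsProbabilityMeasure P]

theorem memLp_nearestDist (hZ : ∀ i, Measurable (Z i)) (hlaw : ∀ i, P.map (Z i) = ν)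
    (hνQ : ν (square c r)ᶜ = 0) (p : ℝ≥0∞) : MemLp (nearestDist Z j) p P := by
  refine .of_bound (measurable_nearestDist hZ).aestronglyMeasurable r ?_
  filter_upwards [ae_nearestDist_le (j := j) hZ hlaw hνQ] with ω h
  rwa [Real.norm_of_nonneg (nearestDist_nonneg ω)]

variable [IsProbabilityMeasure ν]

theorem one_sub_measure_ball_pow_le (hκ : 0 ≤ κ) (hνQ : ν (square c r)ᶜ = 0)
    (hνlow : ∀ A, ENNReal.ofReal (κ / r ^ 2) * volume (A ∩ square c r) ≤ ν A)
    {x : ℝ × ℝ} (hx : x ∈ square c r) (ht : 0 ≤ t) {n : ℕ} (hn : n ≠ 0) :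
    (1 - ν (ball x t)) ^ n ≤ ENNReal.ofReal (exp (-(n * (κ / r ^ 2)) * t ^ 2)) := by
  rcases le_or_gt t r with htr | hrt
  · have hball : ENNReal.ofReal (κ / r ^ 2 * t ^ 2) ≤ ν (ball x t) := by
      rw [ENNReal.ofReal_mul (by positivity)]
      refine le_trans ?_ (hνlow _)
      gcongr
      exact volume_ball_inter_square_ge hx ht htr
    calc (1 - ν (ball x t)) ^ n ≤ ENNReal.ofReal (exp (-(κ / r ^ 2 * t ^ 2))) ^ n := by
          gcongr
          calc 1 - ν (ball x t) ≤ 1 - ENNReal.ofReal (κ / r ^ 2 * t ^ 2) :=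
                tsub_le_tsub_left hball 1
            _ = ENNReal.ofReal (1 - κ / r ^ 2 * t ^ 2) := by
                rw [ENNReal.ofReal_sub _ (by positivity), ENNReal.ofReal_one]
            _ ≤ _ := ENNReal.ofReal_le_ofReal (one_sub_le_exp_neg _)
      _ = _ := by rw [← ENNReal.ofReal_pow (exp_nonneg _), ← exp_nat_mul]; ring_nf
  · have hcompl : 1 - ν (ball x t) = 0 := by
      rw [← prob_compl_eq_one_sub measurableSet_ball]
      exact measure_mono_null (Set.compl_subset_compl.2 (square_subset_ball hx hrt)) hνQ
    simp [hcompl, hn]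

theorem measure_le_nearestDist_le_exp (hZ : ∀ i, Measurable (Z i)) (hind : iIndepFun Z P)
    (hlaw : ∀ i, P.map (Z i) = ν) (hκ : 0 ≤ κ) (hνQ : ν (square c r)ᶜ = 0)
    (hνlow : ∀ A, ENNReal.ofReal (κ / r ^ 2) * volume (A ∩ square c r) ≤ ν A) (ht : 0 ≤ t) :
    P {ω | t ≤ nearestDist Z j ω} ≤
      ENNReal.ofReal (exp (-((Fintype.card ι - 1 : ℕ) * (κ / r ^ 2)) * t ^ 2)) := by
  have hn : Fintype.card ι - 1 ≠ 0 := by have := Fintype.one_lt_card (α := ι); omega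
  rw [measure_le_nearestDist_eq_lintegral hZ hind hlaw]
  calc _ ≤ ∫⁻ _, ENNReal.ofReal (exp (-((Fintype.card ι - 1 : ℕ) * (κ / r ^ 2)) * t ^ 2)) ∂ν :=
        lintegral_mono_ae <| (ae_iff.2 hνQ).mono fun x hx =>
          one_sub_measure_ball_pow_le hκ hνQ hνlow hx ht hn
    _ = _ := by simp

theorem integral_nearestDist_sq_le (hr : 0 < r) (hZ : ∀ i, Measurable (Z i))
    (hind : iIndepFun Z P) (hlaw : ∀ i, P.map (Z i) = ν) (hκ : 0 < κ) (hνQ : ν (square c r)ᶜ = 0)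
    (hνlow : ∀ A, ENNReal.ofReal (κ / r ^ 2) * volume (A ∩ square c r) ≤ ν A) :
    ∫ ω, nearestDist Z j ω ^ 2 ∂P ≤ 2 / κ * r ^ 2 / Fintype.card ι := by
  set k := Fintype.card ι
  have hk : (k : ℝ) ≤ 2 * (k - 1 : ℕ) := by
    have := Fintype.one_lt_card (α := ι); exact_mod_cast (by omega : k ≤ 2 * (k - 1))
  have hk₁ : (0 : ℝ) < (k - 1 : ℕ) := by
    have := Fintype.one_lt_card (α := ι); exact_mod_cast (by omega : 0 < k - 1)
  refine (integral_sq_le_of_measure_le_exp (fun ω => nearestDist_nonneg ω)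
    (measurable_nearestDist hZ) (by positivity)
    fun t ht => measure_le_nearestDist_le_exp hZ hind hlaw hκ.le hνQ hνlow ht).trans ?_
  rw [div_le_div_iff₀ (by positivity) (by positivity)]
  field_simp
  nlinarith

theorem integral_nearestDist_le (hr : 0 < r) (hZ : ∀ i, Measurable (Z i))
    (hind : iIndepFun Z P) (hlaw : ∀ i, P.map (Z i) = ν) (hκ : 0 < κ) (hνQ : ν (square c r)ᶜ = 0)
    (hνlow : ∀ A, ENNReal.ofReal (κ / r ^ 2) * volume (A ∩ square c r) ≤ ν A) :
    ∫ ω, nearestDist Z j ω ∂P ≤ √(2 / κ) * r / √(Fintype.card ι) := by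
  calc ∫ ω, nearestDist Z j ω ∂P ≤ √(∫ ω, nearestDist Z j ω ^ 2 ∂P) :=
        integral_le_sqrt_integral_sq (memLp_nearestDist hZ hlaw hνQ 2)
    _ ≤ √(2 / κ * r ^ 2 / Fintype.card ι) :=
        Real.sqrt_le_sqrt (integral_nearestDist_sq_le hr hZ hind hlaw hκ hνQ hνlow)
    _ = √(2 / κ) * r / √(Fintype.card ι) := by
        rw [Real.sqrt_div' _ (Nat.cast_nonneg _), Real.sqrt_mul' _ (sq_nonneg r),
          Real.sqrt_sq hr.le]

theorem one_sub_mul_le_measureReal_le_nearestDist (hZ : ∀ i, Measurable (Z i))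
    (hind : iIndepFun Z P) (hlaw : ∀ i, P.map (Z i) = ν) (hK : 0 ≤ K)
    (hνup : ∀ A, ν A ≤ ENNReal.ofReal (K / r ^ 2) * volume A) (ht : 0 ≤ t)
    (hq : K / r ^ 2 * (2 * t) ^ 2 ≤ 1) :
    1 - (Fintype.card ι - 1 : ℕ) * (K / r ^ 2 * (2 * t) ^ 2) ≤
      P.real {ω | t ≤ nearestDist Z j ω} := by
  set q := K / r ^ 2 * (2 * t) ^ 2
  set n := Fintype.card ι - 1
  have hball : ∀ x, ν (ball x t) ≤ ENNReal.ofReal q := fun x => by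
    rw [ENNReal.ofReal_mul (by positivity), ← volume_ball_prod x ht]
    exact hνup _
  have hpow : ENNReal.ofReal ((1 - q) ^ n) ≤ P {ω | t ≤ nearestDist Z j ω} := by
    rw [measure_le_nearestDist_eq_lintegral hZ hind hlaw]
    calc ENNReal.ofReal ((1 - q) ^ n) = ∫⁻ _, ENNReal.ofReal ((1 - q) ^ n) ∂ν := by simp
      _ ≤ ∫⁻ x, (1 - ν (ball x t)) ^ n ∂ν := lintegral_mono fun x => by
          rw [ENNReal.ofReal_pow (by linarith), ENNReal.ofReal_sub _ (by positivity),
            ENNReal.ofReal_one]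
          gcongr
          exact hball x
  have hbernoulli : 1 - n * q ≤ (1 - q) ^ n := by
    simpa [sub_eq_add_neg] using one_add_mul_le_pow (by linarith : -2 ≤ -q) n
  exact hbernoulli.trans ((ENNReal.ofReal_le_iff_le_toReal (measure_ne_top _ _)).1 hpow)

theorem integral_nearestDist_ge (hr : 0 < r) (hZ : ∀ i, Measurable (Z i))
    (hind : iIndepFun Z P) (hlaw : ∀ i, P.map (Z i) = ν) (hK : 0 < K)
    (hνQ : ν (square c r)ᶜ = 0) (hνup : ∀ A, ν A ≤ ENNReal.ofReal (K / r ^ 2) * volume A) :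
    √(1 / (8 * K)) / 2 * r / √(Fintype.card ι) ≤ ∫ ω, nearestDist Z j ω ∂P := by
  set k := Fintype.card ι
  have hk : (1 : ℝ) ≤ k := by exact_mod_cast Fintype.card_pos
  set t := √(1 / (8 * K)) * r / √k
  have ht : 0 ≤ t := by positivity
  have hq : K / r ^ 2 * (2 * t) ^ 2 = 1 / (2 * k) := by
    simp only [t, div_pow, mul_pow, Real.sq_sqrt (by positivity : (0 : ℝ) ≤ 1 / (8 * K)),
      Real.sq_sqrt (Nat.cast_nonneg k)]
    field_simp
    ring
  have hhalf : 1 / 2 ≤ P.real {ω | t ≤ nearestDist Z j ω} := by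
    refine le_trans ?_ (one_sub_mul_le_measureReal_le_nearestDist hZ hind hlaw hK.le hνup ht
      (by rw [hq, div_le_one (by positivity)]; linarith))
    have hk₁ : ((k - 1 : ℕ) : ℝ) ≤ k := by exact_mod_cast Nat.sub_le k 1
    rw [hq, mul_one_div, le_sub_comm, div_le_iff₀ (by positivity)]
    linarith
  calc √(1 / (8 * K)) / 2 * r / √k = t * (1 / 2) := by ring
    _ ≤ t * P.real {ω | t ≤ nearestDist Z j ω} := mul_le_mul_of_nonneg_left hhalf ht
    _ ≤ ∫ ω, nearestDist Z j ω ∂P :=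
        mul_meas_ge_le_integral_of_nonneg (ae_of_all _ fun ω => nearestDist_nonneg ω)
          ((memLp_nearestDist hZ hlaw hνQ 1).integrable le_rfl) t

end SquareSample

/-- properties (b1)-(b2): two-sided bounds for the expected minimum
distance from the last of `k` i.i.d. points in a square of side `r` (with density bounded
between `ε₁` and `ε₂`) to the remaining points, and an upper bound for its second moment,
with constants depending only on `ε₁` and `ε₂`. -/
theorem nearest_point_distance_moment_bounds
    (ε₁ ε₂ : ℝ) (hε₁ : 0 < ε₁) (hε₁₂ : ε₁ ≤ ε₂) :
    ∃ γ₁ γ₂ γ₃ : ℝ, 0 < γ₁ ∧ 0 < γ₂ ∧ 0 < γ₃ ∧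
      ∀ (Ω : Type) (mΩ : MeasurableSpace Ω) (Pr : Measure Ω),
        IsProbabilityMeasure Pr →
      ∀ (c : ℝ × ℝ) (r : ℝ), 0 < r →
      ∀ f : ℝ × ℝ → ℝ, Measurable f →
        (∀ x ∈ square c r, ε₁ ≤ f x ∧ f x ≤ ε₂) →
      ∀ (k : ℕ) (hk : 2 ≤ k), ∀ Z : Fin k → Ω → ℝ × ℝ,
        (∀ i, Measurable (Z i)) →
        iIndepFun Z Pr →
        (∀ i, Measure.map (Z i) Pr =
          (volume.restrict (square c r)).withDensity
            fun x => ENNReal.ofReal (f x / ∫ y in square c r, f y)) →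
        (γ₁ * r / Real.sqrt k ≤
            ∫ ω, Metric.infDist (Z ((⟨k - 1, by omega⟩ : Fin k)) ω)
              {p | ∃ i : Fin k, (i : ℕ) < k - 1 ∧ p = Z i ω} ∂Pr) ∧
        ((∫ ω, Metric.infDist (Z ((⟨k - 1, by omega⟩ : Fin k)) ω)
              {p | ∃ i : Fin k, (i : ℕ) < k - 1 ∧ p = Z i ω} ∂Pr) ≤
          γ₂ * r / Real.sqrt k) ∧
        (∫ ω, (Metric.infDist (Z ((⟨k - 1, by omega⟩ : Fin k)) ω)
              {p | ∃ i : Fin k, (i : ℕ) < k - 1 ∧ p = Z i ω}) ^ 2 ∂Pr ≤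
          γ₃ * r ^ 2 / k) := by
  have hε₂ : 0 < ε₂ := hε₁.trans_le hε₁₂
  refine ⟨√(1 / (8 * (ε₂ / ε₁))) / 2, √(2 / (ε₁ / ε₂)), 2 / (ε₁ / ε₂), by positivity,
    by positivity, by positivity, ?_⟩
  intro Ω _ Pr _ c r hr f hf hfQ k hk Z hZ hind hlaw
  set ν := (volume.restrict (square c r)).withDensity
    fun x => ENNReal.ofReal (f x / ∫ y in square c r, f y)
  have : Nontrivial (Fin k) := Fin.nontrivial_iff_two_le.2 hk
  have : IsProbabilityMeasure ν :=
    hlaw ⟨0, by omega⟩ ▸ Measure.isProbabilityMeasure_map (hZ _).aemeasurable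
  have hQ := measurableSet_square c r
  have hvol : volume (square c r) = ENNReal.ofReal (r ^ 2) := volume_square c hr.le
  have hV : volume.real (square c r) = r ^ 2 := by simp [measureReal_def, hvol, sq_nonneg]
  have hdens := fun x (hx : x ∈ square c r) => hV ▸ div_setIntegral_mem_Icc hε₁ hQ
    (by simp [hvol]) (by simp [hvol, hr.ne']) hf hfQ hx
  have hνup' : ∀ A, ν A ≤ ENNReal.ofReal (ε₂ / ε₁ / r ^ 2) * volume (A ∩ square c r) :=
    restrict_withDensity_apply_le hQ fun x hx => ENNReal.ofReal_le_ofReal (hdens x hx).2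
  have hνup : ∀ A, ν A ≤ ENNReal.ofReal (ε₂ / ε₁ / r ^ 2) * volume A := fun A =>
    (hνup' A).trans (by gcongr; exact Set.inter_subset_left)
  have hνlow : ∀ A, ENNReal.ofReal (ε₁ / ε₂ / r ^ 2) * volume (A ∩ square c r) ≤ ν A :=
    le_restrict_withDensity_apply hQ fun x hx => ENNReal.ofReal_le_ofReal (hdens x hx).1
  have hνQ : ν (square c r)ᶜ = 0 := nonpos_iff_eq_zero.1 ((hνup' _).trans_eq (by simp))
  simp only [infDist_setOf_lt_eq_nearestDist (by omega : 0 < k) Z]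
  have hκ : 0 < ε₁ / ε₂ := div_pos hε₁ hε₂
  have hK : 0 < ε₂ / ε₁ := div_pos hε₂ hε₁
  refine ⟨?_, ?_, ?_⟩
  · simpa using integral_nearestDist_ge hr hZ hind hlaw hK hνQ hνup
  · simpa using integral_nearestDist_le hr hZ hind hlaw hκ hνQ hνlow
  · simpa using integral_nearestDist_sq_le hr hZ hind hlaw hκ hνQ hνlow

end
end
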